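/- arXiv:0706.3539 — 8 statements merged into one kernel-verified Lean document; each statement's English description precedes it below -/
import Mathlib

section
/- Let G be a finite group of order n with identity 1, let G* = G \ {1}, and let k be an integer with 1 ≤ k ≤ n−1. Let y ∈ G* and let J ⊆ G* \ {y} be a set of size t such that the sets {x, x⁻¹y}, for x ∈ J, are pairwise disjoint and each of size 2. Then the number of k-element subsets S of G* such that no x ∈ G* satisfies {x, x⁻¹y} ⊆ S is at most p(n,k,t) · C(n−1, k). -/
/-- Integer binomial coefficient: `intChoose a b` is zero unless `0 ≤ b ≤ a`. -/
def intChoose (a b : ℤ) : ℤ :=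
  if 0 ≤ b ∧ b ≤ a then (a.toNat.choose b.toNat : ℤ) else 0

/-- `p(n,k,t) = (∑_{i=0}^t (-1)^i C(t,i) C(n-1-2i, k-2i)) / C(n-1,k)`. -/
def pFun (n k t : ℕ) : ℚ :=
  (∑ i ∈ Finset.range (t + 1),
      (-1) ^ i * (intChoose t i : ℚ) * (intChoose ((n : ℤ) - 1 - 2 * i) ((k : ℤ) - 2 * i) : ℚ))
    / ((n - 1).choose k : ℚ)

/-!
Forbidding only the pairs `{x, x⁻¹ * y}` with `x ∈ J` can only increase the count. These `t`
pairs are pairwise disjoint `2`-subsets of `G*`, and the `k`-subsets of `G*` containing all pairs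
indexed by `I ⊆ J` number `C(n - 1 - 2|I|, k - 2|I|)`; so by inclusion–exclusion the relaxed count
is `∑_{I ⊆ J} (-1)^|I| C(n - 1 - 2|I|, k - 2|I|)`, which is `p(n,k,t) · C(n-1,k)` after grouping
the subsets `I` by size.
-/

open Finset

theorem intChoose_natCast (a b : ℕ) : intChoose a b = a.choose b := by
  unfold intChoose
  split_ifs with h
  · simp
  · rw [Nat.choose_eq_zero_of_lt (by omega), Nat.cast_zero]

theorem intChoose_natCast_sub {a b : ℕ} (j : ℕ) (hba : b ≤ a) :
    intChoose ((a : ℤ) - j) ((b : ℤ) - j) = if j ≤ b then ((a - j).choose (b - j) : ℤ) else 0 := by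
  split_ifs with hj
  · rw [← intChoose_natCast, Nat.cast_sub (hj.trans hba), Nat.cast_sub hj]
  · unfold intChoose
    rw [if_neg (by omega)]

section Counting

variable {α ι : Type*} [DecidableEq α]

theorem card_powersetCard_filter_superset {A B : Finset α} {k : ℕ} (hBA : B ⊆ A) (hBk : #B ≤ k) :
    #{S ∈ A.powersetCard k | B ⊆ S} = (#A - #B).choose (k - #B) := by
  rw [← card_sdiff_of_subset hBA, ← card_powersetCard]
  refine card_nbij' (· \ B) (· ∪ B) ?_ ?_ ?_ ?_
  · intro S hS
    simp only [mem_coe, mem_filter, mem_powersetCard] at hS ⊢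
    exact ⟨sdiff_subset_sdiff hS.1.1 le_rfl, by rw [card_sdiff_of_subset hS.2, hS.1.2]⟩
  · intro T hT
    simp only [mem_coe, mem_powersetCard] at hT
    have hTB : Disjoint T B := disjoint_of_subset_left hT.1 sdiff_disjoint
    simp only [mem_coe, mem_filter, mem_powersetCard]
    refine ⟨⟨union_subset (hT.1.trans sdiff_subset) hBA, ?_⟩, subset_union_right⟩
    rw [card_union_of_disjoint hTB, hT.2]
    omega
  · intro S hS
    exact sdiff_union_of_subset (mem_filter.1 hS).2
  · intro T hT
    exact union_sdiff_cancel_right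
      (disjoint_of_subset_left (mem_powersetCard.1 hT).1 sdiff_disjoint)

theorem intCast_card_powersetCard_filter_superset {A B : Finset α} {k : ℕ} (hBA : B ⊆ A)
    (hk : k ≤ #A) :
    (#{S ∈ A.powersetCard k | B ⊆ S} : ℤ) = intChoose (#A - #B) (k - #B) := by
  rw [intChoose_natCast_sub _ hk]
  split_ifs with hBk
  · rw [card_powersetCard_filter_superset hBA hBk]
  · rw [Nat.cast_eq_zero, card_eq_zero, filter_eq_empty_iff]
    intro S hS hBS
    have := card_le_card hBS
    rw [(mem_powersetCard.1 hS).2] at this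
    omega

theorem card_filter_forall_not_subset_eq_sum_powerset (𝒮 : Finset (Finset α))
    (J : Finset ι) (P : ι → Finset α) :
    (#{S ∈ 𝒮 | ∀ x ∈ J, ¬ P x ⊆ S} : ℤ)
      = ∑ I ∈ J.powerset, (-1 : ℤ) ^ #I * #{S ∈ 𝒮 | I.biUnion P ⊆ S} := by
  classical
  calc (#{S ∈ 𝒮 | ∀ x ∈ J, ¬ P x ⊆ S} : ℤ)
      = ∑ S ∈ 𝒮, ∑ I ∈ {x ∈ J | P x ⊆ S}.powerset, (-1 : ℤ) ^ #I := by
        simp only [sum_powerset_neg_one_pow_card, filter_eq_empty_iff, sum_boole]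
    _ = ∑ I ∈ J.powerset, ∑ S ∈ 𝒮 with I.biUnion P ⊆ S, (-1) ^ #I := by
        refine sum_comm' fun S I => ?_
        simp only [mem_powerset, mem_filter, biUnion_subset, subset_iff (s₁ := I)]
        exact ⟨fun ⟨hS, hI⟩ => ⟨⟨hS, fun x hx => (hI hx).2⟩, fun x hx => (hI hx).1⟩,
          fun ⟨⟨hS, hP⟩, hIJ⟩ => ⟨hS, fun x hx => ⟨hIJ hx, hP x hx⟩⟩⟩
    _ = _ := by
        simp only [sum_const, nsmul_eq_mul, mul_comm]

theorem card_powersetCard_filter_forall_not_subset {A : Finset α} {J : Finset ι}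
    {P : ι → Finset α} {m k : ℕ} (hk : k ≤ #A) (hPA : ∀ x ∈ J, P x ⊆ A)
    (hPm : ∀ x ∈ J, #(P x) = m) (hP : (J : Set ι).PairwiseDisjoint P) :
    (#{S ∈ A.powersetCard k | ∀ x ∈ J, ¬ P x ⊆ S} : ℤ)
      = ∑ i ∈ range (#J + 1),
          (-1) ^ i * ((#J).choose i : ℤ) * intChoose (#A - m * i) (k - m * i) := by
  rw [card_filter_forall_not_subset_eq_sum_powerset]
  have hterm : ∀ I ∈ J.powerset, (-1) ^ #I * (#{S ∈ A.powersetCard k | I.biUnion P ⊆ S} : ℤ)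
      = (-1) ^ #I * intChoose (#A - m * #I) (k - m * #I) := by
    intro I hI
    have hIJ := mem_powerset.1 hI
    have hcard : #(I.biUnion P) = m * #I := by
      rw [card_biUnion (hP.subset hIJ), sum_congr rfl fun x hx => hPm x (hIJ hx), sum_const,
        smul_eq_mul, mul_comm]
    rw [intCast_card_powersetCard_filter_superset (biUnion_subset.2 fun x hx => hPA x (hIJ hx)) hk,
      hcard, Nat.cast_mul]
  rw [sum_congr rfl hterm,
    sum_powerset_apply_card (fun i => (-1) ^ i * intChoose (#A - m * i) (k - m * i))]
  simp only [nsmul_eq_mul, mul_assoc, mul_left_comm]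

end Counting

theorem pFun_mul_choose {n k : ℕ} (t : ℕ) (hk : k ≤ n - 1) :
    pFun n k t * ((n - 1).choose k : ℚ)
      = ((∑ i ∈ range (t + 1),
          (-1) ^ i * (t.choose i : ℤ) * intChoose ((n : ℤ) - 1 - 2 * i) (k - 2 * i) : ℤ) : ℚ) := by
  have hchoose : ((n - 1).choose k : ℚ) ≠ 0 := Nat.cast_ne_zero.2 (Nat.choose_pos hk).ne'
  rw [pFun, div_mul_cancel₀ _ hchoose]
  push_cast [intChoose_natCast]
  rfl

theorem stmt_0_general {G : Type*} [Group G] [Fintype G] [DecidableEq G]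
    (n k t : ℕ) (hcard : Fintype.card G = n) (hk2 : k ≤ n - 1)
    (y : G)
    (J : Finset G) (hJ : J ⊆ (Finset.univ.erase (1 : G)).erase y) (hJcard : J.card = t)
    (hsize : ∀ x ∈ J, ({x, x⁻¹ * y} : Finset G).card = 2)
    (hdisj : ∀ x ∈ J, ∀ x' ∈ J, x ≠ x' →
      Disjoint ({x, x⁻¹ * y} : Finset G) ({x', x'⁻¹ * y} : Finset G)) :
    (((((Finset.univ.erase (1 : G)).powersetCard k).filter
        (fun S => ∀ x ∈ Finset.univ.erase (1 : G),
          ¬ ({x, x⁻¹ * y} : Finset G) ⊆ S)).card : ℚ))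
      ≤ pFun n k t * ((n - 1).choose k : ℚ) := by
  set A : Finset G := univ.erase 1
  have hA : #A = n - 1 := by rw [card_erase_of_mem (mem_univ _), card_univ, hcard]
  have hpair : ∀ x ∈ J, ({x, x⁻¹ * y} : Finset G) ⊆ A := by
    intro x hx
    obtain ⟨hxy, hx1⟩ := mem_erase.1 (hJ hx)
    refine insert_subset hx1 (singleton_subset_iff.2 (mem_erase.2 ⟨?_, mem_univ _⟩))
    rwa [Ne, inv_mul_eq_one]
  have hcount := card_powersetCard_filter_forall_not_subset (hA ▸ hk2) hpair hsize hdisj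
  rw [hA, hJcard, Nat.cast_pred (hcard ▸ Fintype.card_pos), Nat.cast_ofNat] at hcount
  calc (#{S ∈ A.powersetCard k | ∀ x ∈ A, ¬ {x, x⁻¹ * y} ⊆ S} : ℚ)
      ≤ #{S ∈ A.powersetCard k | ∀ x ∈ J, ¬ {x, x⁻¹ * y} ⊆ S} :=
        Nat.cast_le.2 <| card_le_card <| monotone_filter_right _ fun S _ hS x hx =>
          hS x (erase_subset _ _ (hJ hx))
    _ = pFun n k t * ((n - 1).choose k : ℚ) := by
        rw [pFun_mul_choose t hk2, ← hcount, Int.cast_natCast]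
        -- the two filters differ only in their `Decidable` instances
        congr

theorem stmt_0 {G : Type*} [Group G] [Fintype G] [DecidableEq G]
    (n k t : ℕ) (hcard : Fintype.card G = n) (hk1 : 1 ≤ k) (hk2 : k ≤ n - 1)
    (y : G) (hy : y ∈ Finset.univ.erase (1 : G))
    (J : Finset G) (hJ : J ⊆ (Finset.univ.erase (1 : G)).erase y) (hJcard : J.card = t)
    (hsize : ∀ x ∈ J, ({x, x⁻¹ * y} : Finset G).card = 2)
    (hdisj : ∀ x ∈ J, ∀ x' ∈ J, x ≠ x' →
      Disjoint ({x, x⁻¹ * y} : Finset G) ({x', x'⁻¹ * y} : Finset G)) :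
    (((((Finset.univ.erase (1 : G)).powersetCard k).filter
        (fun S => ∀ x ∈ Finset.univ.erase (1 : G),
          ¬ ({x, x⁻¹ * y} : Finset G) ⊆ S)).card : ℚ))
      ≤ pFun n k t * ((n - 1).choose k : ℚ) :=
  stmt_0_general n k t hcard hk2 y J hJ hJcard hsize hdisj
end

section
/- If y is a non-trivial element of a finite group G, then the number of elements x ∈ G with x² = y is at most (3/4)·|G|, i.e., 4 · |{x ∈ G : x² = y}| ≤ 3 · |G|. -/
/-!
Fix a square root `a` of `y`. Left multiplication by `a⁻¹` maps the square roots of `y = a²`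
bijectively onto the set `T` of elements inverted by conjugation by `a`. If `|T| > 3|G|/4`, then for
`t ∈ T` more than half of `G` lies in `T ∩ t⁻¹T`, whose elements commute with `t`; so `T` consists
of central elements, hence is a subgroup, and having more than `|G|/2` elements it is all of `G`.
In particular `a = a a a⁻¹ = a⁻¹`, i.e. `y = a² = 1`.
-/

open Finset Pointwise

lemma mul_sq_eq_sq_iff {G : Type*} [Group G] (a t : G) :
    (a * t) ^ 2 = a ^ 2 ↔ MulAut.conj a t = t⁻¹ := by
  rw [MulAut.conj_apply, sq, sq, mul_inv_eq_iff_eq_mul, eq_inv_mul_iff_mul_eq]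
  simp only [mul_assoc, mul_right_inj]

lemma card_add_card_le_card_inter_add_card {α : Type*} [Fintype α] [DecidableEq α]
    (s t : Finset α) : #s + #t ≤ #(s ∩ t) + Fintype.card α := by
  rw [← card_union_add_card_inter, add_comm]
  exact Nat.add_le_add_left (card_le_univ _) _

lemma Subgroup.eq_top_of_card_lt_two_mul_card {G : Type*} [Group G] [Fintype G] {H : Subgroup G}
    {s : Finset G} (hs : ∀ x ∈ s, x ∈ H) (h : Fintype.card G < 2 * #s) : H = ⊤ := by
  by_contra hH
  have hsH : #s ≤ Nat.card H := by
    rw [← Set.ncard_coe_finset, ← Nat.card_coe_set_eq]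
    exact Nat.card_mono (Set.toFinite _) hs
  have := H.card_mul_index
  have := H.one_lt_index_of_ne_top hH
  rw [Nat.card_eq_fintype_card (α := G)] at *
  nlinarith

namespace MonoidHom

variable {G : Type*} [Group G]

def invertedCenter (φ : G →* G) : Subgroup G where
  carrier := {z | z ∈ Subgroup.center G ∧ φ z = z⁻¹}
  one_mem' := ⟨Subgroup.one_mem _, by simp⟩
  mul_mem' := by
    rintro z w ⟨hz, hφz⟩ ⟨hw, hφw⟩
    refine ⟨Subgroup.mul_mem _ hz hw, ?_⟩
    rw [map_mul, hφz, hφw, mul_inv_rev]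
    exact (Subgroup.mem_center_iff.mp (Subgroup.inv_mem _ hz) w⁻¹).symm
  inv_mem' := by
    rintro z ⟨hz, hφz⟩
    exact ⟨Subgroup.inv_mem _ hz, by rw [map_inv, hφz]⟩

lemma mem_invertedCenter {φ : G →* G} {z : G} :
    z ∈ φ.invertedCenter ↔ z ∈ Subgroup.center G ∧ φ z = z⁻¹ := Iff.rfl

lemma map_mul_eq_inv_iff {φ : G →* G} {t u : G} (ht : φ t = t⁻¹) (hu : φ u = u⁻¹) :
    φ (t * u) = (t * u)⁻¹ ↔ Commute t u := by
  rw [map_mul, ht, hu, mul_inv_rev, ← Commute.inv_inv_iff]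
  rfl

variable [Fintype G] [DecidableEq G]

def invertedBy (φ : G →* G) : Finset G := univ.filter fun t => φ t = t⁻¹

lemma mem_invertedBy {φ : G →* G} {t : G} : t ∈ φ.invertedBy ↔ φ t = t⁻¹ := by
  simp [invertedBy]

variable {φ : G →* G}

lemma mem_center_of_mem_invertedBy (hφ : 3 * Fintype.card G < 4 * #φ.invertedBy) {t : G}
    (ht : t ∈ φ.invertedBy) : t ∈ Subgroup.center G := by
  set T := φ.invertedBy
  have hcentralizer : Subgroup.centralizer {t} = ⊤ := by
    refine Subgroup.eq_top_of_card_lt_two_mul_card (s := T ∩ t⁻¹ • T) ?_ ?_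
    · intro u hu
      rw [mem_inter, mem_inv_smul_finset_iff, smul_eq_mul] at hu
      rw [Subgroup.mem_centralizer_singleton_iff]
      exact ((map_mul_eq_inv_iff (mem_invertedBy.1 ht) (mem_invertedBy.1 hu.1)).1
        (mem_invertedBy.1 hu.2)).symm
    · have := card_add_card_le_card_inter_add_card T (t⁻¹ • T)
      rw [card_smul_finset] at this
      omega
  rw [Subgroup.mem_center_iff]
  intro g
  exact Subgroup.mem_centralizer_singleton_iff.1 (hcentralizer ▸ Subgroup.mem_top g)

lemma map_eq_inv_of_card_invertedBy (hφ : 3 * Fintype.card G < 4 * #φ.invertedBy) (g : G) :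
    φ g = g⁻¹ := by
  have htop : φ.invertedCenter = ⊤ := by
    refine Subgroup.eq_top_of_card_lt_two_mul_card (s := φ.invertedBy) ?_ (by omega)
    intro t ht
    exact ⟨mem_center_of_mem_invertedBy hφ ht, mem_invertedBy.1 ht⟩
  exact (mem_invertedCenter.1 (htop ▸ Subgroup.mem_top g)).2

end MonoidHom

theorem stmt_1 {G : Type*} [Group G] [Fintype G] [DecidableEq G]
    (y : G) (hy : y ≠ 1) :
    4 * (Finset.univ.filter (fun x : G => x ^ 2 = y)).card ≤ 3 * Fintype.card G := by
  by_contra! hcard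
  obtain ⟨a, ha⟩ : ∃ a : G, a ^ 2 = y := by
    obtain ⟨a, ha⟩ := card_pos.1 (by omega : 0 < #(univ.filter fun x : G => x ^ 2 = y))
    exact ⟨a, (mem_filter.1 ha).2⟩
  set φ := (MulAut.conj a).toMonoidHom
  have hroots : #(univ.filter fun x : G => x ^ 2 = y) = #φ.invertedBy := by
    refine card_equiv (Equiv.mulLeft a⁻¹) fun x => ?_
    have hsq := mul_sq_eq_sq_iff a (a⁻¹ * x)
    rw [mul_inv_cancel_left] at hsq
    rw [mem_filter, MonoidHom.mem_invertedBy, ← ha, Equiv.coe_mulLeft]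
    exact and_iff_right (mem_univ x) |>.trans hsq
  have hinv := MonoidHom.map_eq_inv_of_card_invertedBy (hroots ▸ hcard) a
  simp only [φ, MulEquiv.coe_toMonoidHom, MulAut.conj_apply, mul_inv_cancel_right] at hinv
  exact hy (ha ▸ sq a ▸ mul_eq_one_iff_eq_inv.2 hinv)
end

section
/- Let Q be the quaternion group of order 8 with central involution −1, let q be a nonnegative integer, and let G = Q × (ℤ/2ℤ)^q. For the element y = (−1, 0, …, 0) of G, the number of x ∈ G with x² = y equals (3/4)·|G|; in particular the bound |σ(y)| ≤ (3/4)|G| on the number of square roots of a non-identity element is sharp. -/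
/-!
Squaring is coordinatewise, and every element of `(ℤ/2ℤ)^q` squares to the identity, so the
square roots of `(-1, 0)` are exactly the pairs `(x, b)` with `x² = -1` in `Q`. In `Q` these are
the six elements `±i, ±j, ±k`, i.e. three quarters of `Q`.
-/

open Finset

lemma ZModModule.sq_eq_one {A : Type*} [AddCommGroup A] [Module (ZMod 2) A]
    (b : Multiplicative A) : b ^ 2 = 1 :=
  Multiplicative.toAdd.injective <| by
    rw [toAdd_pow, toAdd_one, two_nsmul, ZModModule.add_self]

lemma card_filter_sq_eq_prod_one {G H : Type*} [Monoid G] [Monoid H] [Fintype G] [Fintype H]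
    [DecidableEq G] [DecidableEq H] (hH : ∀ b : H, b ^ 2 = 1) (g : G) :
    #{x : G × H | x ^ 2 = (g, 1)} = #{a : G | a ^ 2 = g} * Fintype.card H := by
  have hroots : ({x : G × H | x ^ 2 = (g, 1)} : Finset (G × H)) =
      ({a : G | a ^ 2 = g} : Finset G) ×ˢ univ := by
    ext ⟨a, b⟩
    simp [Prod.pow_mk, hH]
  rw [hroots, card_product, card_univ]

lemma QuaternionGroup.card_filter_sq_eq_a_two :
    #{x : QuaternionGroup 2 | x ^ 2 = a 2} = 6 := by
  decide

theorem stmt_2 (q : ℕ) :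
    let G := QuaternionGroup 2 × Multiplicative (Fin q → ZMod 2)
    let y : G := (QuaternionGroup.a 2, 1)
    4 * (Finset.univ.filter (fun x : G => x ^ 2 = y)).card = 3 * Fintype.card G := by
  intro G y
  rw [card_filter_sq_eq_prod_one ZModModule.sq_eq_one, QuaternionGroup.card_filter_sq_eq_a_two,
    Fintype.card_prod, QuaternionGroup.card]
  ring
end

section
/- Let G be a finite group of order n with identity 1, let y ∈ G with y ≠ 1, and let s = |{x ∈ G : x² = y}|. Then there exists a set J ⊆ G \ {1, y} of size ⌊(n−1−s)/3⌋ such that the sets {x, x⁻¹y}, for x ∈ J, are pairwise disjoint and each of size 2. -/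
lemma aux_greedy {G : Type*} [Group G] [DecidableEq G] (y : G) :
    ∀ (k : ℕ) (A : Finset G), (∀ x ∈ A, x⁻¹ * y ≠ x) → 3 * k ≤ A.card + 2 →
      ∃ J : Finset G, J ⊆ A ∧ J.card = k ∧ ∀ x ∈ J, x⁻¹ * y ∉ J := by
  intro k
  induction k with
  | zero => exact fun A _ _ => ⟨∅, by simp⟩
  | succ k ih =>
    intro A hA h
    have hApos : 0 < A.card := by omega
    obtain ⟨a, ha⟩ := Finset.card_pos.mp hApos
    set A' := A \ {a, a⁻¹ * y, y * a⁻¹} with hA'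
    have hsub : A' ⊆ A := Finset.sdiff_subset
    have hcov : A ⊆ A' ∪ {a, a⁻¹ * y, y * a⁻¹} := by
      intro x hx
      rw [Finset.mem_union, hA', Finset.mem_sdiff]
      tauto
    have hcard : A.card ≤ A'.card + 3 := by
      calc A.card ≤ (A' ∪ {a, a⁻¹ * y, y * a⁻¹}).card := Finset.card_le_card hcov
        _ ≤ A'.card + ({a, a⁻¹ * y, y * a⁻¹} : Finset G).card := Finset.card_union_le _ _
        _ ≤ A'.card + 3 := by
            have h3 : ({a, a⁻¹ * y, y * a⁻¹} : Finset G).card ≤ 3 := by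
              calc ({a, a⁻¹ * y, y * a⁻¹} : Finset G).card
                  ≤ ({a⁻¹ * y, y * a⁻¹} : Finset G).card + 1 := Finset.card_insert_le _ _
                _ ≤ ({y * a⁻¹} : Finset G).card + 1 + 1 :=
                    Nat.add_le_add_right (Finset.card_insert_le _ _) 1
                _ = 3 := by simp
            omega
    obtain ⟨J', hJ'sub, hJ'card, hJ'cond⟩ :=
      ih A' (fun x hx => hA x (hsub hx)) (by omega)
    have hanotA' : a ∉ A' := by simp [hA']
    have haniy : a⁻¹ * y ∉ A' := by simp [hA']
    have hanya : y * a⁻¹ ∉ A' := by simp [hA']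
    refine ⟨insert a J', ?_, ?_, ?_⟩
    · exact Finset.insert_subset ha (hJ'sub.trans hsub)
    · rw [Finset.card_insert_of_notMem (fun h => hanotA' (hJ'sub h)), hJ'card]
    · intro x hx
      rcases Finset.mem_insert.mp hx with rfl | hx
      · simp only [Finset.mem_insert, not_or]
        exact ⟨hA _ ha, fun h => haniy (hJ'sub h)⟩
      · simp only [Finset.mem_insert, not_or]
        constructor
        · intro h
          apply hanya
          apply hJ'sub
          have : x = y * a⁻¹ := by
            have hx' : x⁻¹ = a * y⁻¹ := by rw [← h]; group
            calc x = (x⁻¹)⁻¹ := (inv_inv x).symm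
              _ = y * a⁻¹ := by rw [hx']; group
          rw [← this]; exact hx
        · exact hJ'cond x hx

theorem stmt_4 {G : Type*} [Group G] [Fintype G] [DecidableEq G]
    (n s : ℕ) (hcard : Fintype.card G = n)
    (y : G) (hy : y ≠ 1)
    (hs : s = (Finset.univ.filter (fun x : G => x ^ 2 = y)).card) :
    ∃ J : Finset G, J ⊆ (Finset.univ.erase (1 : G)).erase y ∧
      J.card = (n - 1 - s) / 3 ∧
      (∀ x ∈ J, ({x, x⁻¹ * y} : Finset G).card = 2) ∧
      (∀ x ∈ J, ∀ x' ∈ J, x ≠ x' →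
        Disjoint ({x, x⁻¹ * y} : Finset G) ({x', x'⁻¹ * y} : Finset G)) := by
  set B := (Finset.univ.erase (1 : G)).erase y with hB
  set A := B.filter (fun x => ¬ x ^ 2 = y) with hAdef
  have hBcard : B.card = n - 2 := by
    rw [hB, Finset.card_erase_of_mem (by simp [hy]),
      Finset.card_erase_of_mem (by simp), Finset.card_univ, hcard]
    omega
  have hsB : Finset.univ.filter (fun x : G => x ^ 2 = y) ⊆ B := by
    intro x hx
    simp only [Finset.mem_filter, Finset.mem_univ, true_and] at hx
    have hx1 : x ≠ 1 := fun h => hy (by rw [h, one_pow] at hx; exact hx.symm)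
    have hxy : x ≠ y := by
      intro h
      rw [h, pow_two] at hx
      apply hy
      have : y * y = y * 1 := by rw [hx, mul_one]
      exact mul_left_cancel this
    simp [hB, Finset.mem_erase, hx1, hxy]
  have hfeq : B.filter (fun x => x ^ 2 = y)
      = Finset.univ.filter (fun x : G => x ^ 2 = y) := by
    apply Finset.Subset.antisymm
    · exact fun x hx => Finset.mem_filter.mpr
        ⟨Finset.mem_univ x, (Finset.mem_filter.mp hx).2⟩
    · exact fun x hx => Finset.mem_filter.mpr ⟨hsB hx, (Finset.mem_filter.mp hx).2⟩
  have hAcard : A.card = n - 2 - s := by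
    rw [hAdef, Finset.filter_not, Finset.card_sdiff_of_subset (Finset.filter_subset _ _),
      hfeq, hBcard, hs]
  have hsle : s ≤ n - 2 := by
    rw [hs, ← hBcard]; exact Finset.card_le_card hsB
  have hfix : ∀ x ∈ A, x⁻¹ * y ≠ x := by
    intro x hx h
    have hx2 : ¬ x ^ 2 = y := (Finset.mem_filter.mp hx).2
    apply hx2
    rw [pow_two, ← mul_inv_cancel_left x y, h]
  have hdiv : 3 * ((n - 1 - s) / 3) ≤ A.card + 2 := by
    have h1 : (n - 1 - s) / 3 * 3 ≤ n - 1 - s := Nat.div_mul_le_self _ _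
    omega
  obtain ⟨J, hJA, hJcard, hJcond⟩ := aux_greedy y ((n - 1 - s) / 3) A hfix hdiv
  have hJB : J ⊆ B := hJA.trans (Finset.filter_subset _ _)
  refine ⟨J, hJB, hJcard, ?_, ?_⟩
  · intro x hx
    have := hfix x (hJA hx)
    rw [Finset.card_pair (Ne.symm this)]
  · intro x hx x' hx' hne
    rw [Finset.disjoint_left]
    intro a haa hab
    simp only [Finset.mem_insert, Finset.mem_singleton] at haa hab
    rcases haa with rfl | rfl <;> rcases hab with h | h
    · exact hne h
    · exact hJcond x' hx' (h ▸ hx)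
    · exact hJcond x hx (h ▸ hx')
    · apply hne
      have : x = x' := by
        have := mul_right_cancel h
        exact inv_injective this
      exact this
end

section
/- For integers n, k, t ≥ 0 with 2t ≤ n, one has 0 ≤ a(n,k,t) ≤ C(n,k); moreover a(n,k,t) is weakly decreasing in t, i.e., if 2(t+1) ≤ n then a(n,k,t+1) ≤ a(n,k,t). -/
/-- `a(n,k,t) = ∑_{i=0}^t (-1)^i C(t,i) C(n-2i, k-2i)`. -/
def aFun (n k t : ℕ) : ℤ :=
  ∑ i ∈ Finset.range (t + 1),
    (-1) ^ i * intChoose t i * intChoose ((n : ℤ) - 2 * i) ((k : ℤ) - 2 * i)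

lemma intChoose_of_neg {a b : ℤ} (hb : b < 0) : intChoose a b = 0 := by
  simp [intChoose]; intro h; omega

lemma intChoose_of_lt {a b : ℤ} (h : a < b) : intChoose a b = 0 := by
  simp [intChoose]; intro h'; omega

lemma intChoose_natCast_s10 (n k : ℕ) : intChoose (n : ℤ) (k : ℤ) = (n.choose k : ℤ) := by
  unfold intChoose
  split_ifs with h
  · simp
  · have hk : n < k := by
      push_neg at h
      have := h (by positivity)
      exact_mod_cast this
    rw [Nat.choose_eq_zero_of_lt hk]
    simp

lemma intChoose_zero_right {a : ℤ} (ha : 0 ≤ a) : intChoose a 0 = 1 := by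
  simp [intChoose, ha]

lemma pascal_int (a b : ℤ) (ha : 0 ≤ a) :
    intChoose (a + 1) b = intChoose a b + intChoose a (b - 1) := by
  obtain ⟨A, rfl⟩ := Int.eq_ofNat_of_zero_le ha
  rcases lt_or_ge b 0 with hb | hb
  · rw [intChoose_of_neg hb, intChoose_of_neg hb, intChoose_of_neg (by omega)]
    ring
  · obtain ⟨B, rfl⟩ := Int.eq_ofNat_of_zero_le hb
    cases B with
    | zero =>
      simp only [Nat.cast_zero]
      rw [intChoose_zero_right (by positivity), intChoose_zero_right (by positivity),
        intChoose_of_neg (by norm_num)]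
      ring
    | succ C =>
      have e1 : ((A : ℤ) + 1) = ((A + 1 : ℕ) : ℤ) := by push_cast; ring
      have e2 : ((C + 1 : ℕ) : ℤ) - 1 = ((C : ℕ) : ℤ) := by push_cast; ring
      rw [e1, e2, intChoose_natCast_s10, intChoose_natCast_s10, intChoose_natCast_s10,
        Nat.choose_succ_succ]
      push_cast
      ring

/-- Pascal recurrence in `n`. -/
lemma aFun_pascal (n k t : ℕ) (ht : 2 * t ≤ n) :
    aFun (n + 1) (k + 1) t = aFun n (k + 1) t + aFun n k t := by
  unfold aFun
  rw [← Finset.sum_add_distrib]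
  apply Finset.sum_congr rfl
  intro i hi
  have hi' : i ≤ t := by simpa [Nat.lt_succ_iff] using hi
  have ha : (0 : ℤ) ≤ (n : ℤ) - 2 * i := by
    have : (2 * i : ℤ) ≤ (n : ℤ) := by exact_mod_cast le_trans (by omega) ht
    linarith
  have e1 : ((n + 1 : ℕ) : ℤ) - 2 * i = ((n : ℤ) - 2 * i) + 1 := by push_cast; ring
  have hp := pascal_int ((n : ℤ) - 2 * i) (((k + 1 : ℕ) : ℤ) - 2 * i) ha
  have e2 : ((k + 1 : ℕ) : ℤ) - 2 * i - 1 = ((k : ℕ) : ℤ) - 2 * i := by push_cast; ring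
  rw [e1, hp, e2]
  ring

/-- Recurrence removing one pair. -/
lemma aFun_pair (n k t : ℕ) :
    aFun (n + 2) (k + 2) (t + 1) = aFun (n + 2) (k + 2) t - aFun n k t := by
  unfold aFun
  have key : ∀ i ∈ Finset.range (t + 1 + 1),
      (-1) ^ i * intChoose ((t + 1 : ℕ) : ℤ) i *
        intChoose (((n + 2 : ℕ) : ℤ) - 2 * i) (((k + 2 : ℕ) : ℤ) - 2 * i)
      = (-1) ^ i * intChoose (t : ℤ) i *
          intChoose (((n + 2 : ℕ) : ℤ) - 2 * i) (((k + 2 : ℕ) : ℤ) - 2 * i)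
        + (-1) ^ i * intChoose (t : ℤ) ((i : ℤ) - 1) *
          intChoose (((n + 2 : ℕ) : ℤ) - 2 * i) (((k + 2 : ℕ) : ℤ) - 2 * i) := by
    intro i _
    have e : ((t + 1 : ℕ) : ℤ) = (t : ℤ) + 1 := by push_cast; ring
    rw [e, pascal_int (t : ℤ) (i : ℤ) (by positivity)]
    ring
  rw [Finset.sum_congr rfl key, Finset.sum_add_distrib]
  have h1 : ∑ i ∈ Finset.range (t + 1 + 1),
      (-1) ^ i * intChoose (t : ℤ) i *
        intChoose (((n + 2 : ℕ) : ℤ) - 2 * i) (((k + 2 : ℕ) : ℤ) - 2 * i)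
      = ∑ i ∈ Finset.range (t + 1),
          (-1) ^ i * intChoose (t : ℤ) i *
            intChoose (((n + 2 : ℕ) : ℤ) - 2 * i) (((k + 2 : ℕ) : ℤ) - 2 * i) := by
    rw [Finset.sum_range_succ]
    rw [intChoose_of_lt (show (t : ℤ) < ((t + 1 : ℕ) : ℤ) by push_cast; linarith)]
    ring
  have h2 : ∑ i ∈ Finset.range (t + 1 + 1),
      (-1) ^ i * intChoose (t : ℤ) ((i : ℤ) - 1) *
        intChoose (((n + 2 : ℕ) : ℤ) - 2 * i) (((k + 2 : ℕ) : ℤ) - 2 * i)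
      = - ∑ i ∈ Finset.range (t + 1),
          (-1) ^ i * intChoose (t : ℤ) i *
            intChoose ((n : ℤ) - 2 * i) ((k : ℤ) - 2 * i) := by
    rw [Finset.sum_range_succ']
    have h0 : (-1 : ℤ) ^ 0 * intChoose (t : ℤ) (((0 : ℕ) : ℤ) - 1) *
        intChoose (((n + 2 : ℕ) : ℤ) - 2 * (0 : ℕ)) (((k + 2 : ℕ) : ℤ) - 2 * (0 : ℕ)) = 0 := by
      rw [intChoose_of_neg (by norm_num)]
      ring
    rw [h0, add_zero, ← Finset.sum_neg_distrib]
    apply Finset.sum_congr rfl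
    intro i _
    have e1 : ((i + 1 : ℕ) : ℤ) - 1 = (i : ℤ) := by push_cast; ring
    have e2 : ((n + 2 : ℕ) : ℤ) - 2 * ((i + 1 : ℕ) : ℤ) = (n : ℤ) - 2 * i := by push_cast; ring
    have e3 : ((k + 2 : ℕ) : ℤ) - 2 * ((i + 1 : ℕ) : ℤ) = (k : ℤ) - 2 * i := by push_cast; ring
    push_cast [e1] at *
    rw [show ((n:ℤ) + 2 - 2 * ((i:ℤ) + 1)) = (n : ℤ) - 2 * i by ring,
      show ((k:ℤ) + 2 - 2 * ((i:ℤ) + 1)) = (k : ℤ) - 2 * i by ring,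
      pow_succ]
    ring
  rw [h1, h2]
  ring

lemma aFun_k_zero (n t : ℕ) : aFun n 0 t = 1 := by
  unfold aFun
  rw [Finset.sum_eq_single 0]
  · simp [intChoose_zero_right (show (0:ℤ) ≤ (t:ℤ) by positivity),
      intChoose_zero_right (show (0:ℤ) ≤ (n:ℤ) by positivity)]
  · intro i _ hi
    have : ((0 : ℕ) : ℤ) - 2 * i < 0 := by
      have : 1 ≤ i := Nat.one_le_iff_ne_zero.mpr hi
      have : (1 : ℤ) ≤ (i : ℤ) := by exact_mod_cast this
      push_cast
      linarith
    rw [intChoose_of_neg this]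
    ring
  · intro h
    exact absurd (Finset.mem_range.mpr (Nat.succ_pos t)) h

lemma aFun_k_one (n t : ℕ) : aFun n 1 t = (n : ℤ) := by
  unfold aFun
  rw [Finset.sum_eq_single 0]
  · simp only [Nat.cast_zero, mul_zero, sub_zero, pow_zero, Nat.cast_one]
    rw [intChoose_zero_right (show (0:ℤ) ≤ (t:ℤ) by positivity),
      show ((1:ℤ)) = ((1:ℕ):ℤ) by norm_num, intChoose_natCast_s10, Nat.choose_one_right]
    ring
  · intro i _ hi
    have : ((1 : ℕ) : ℤ) - 2 * i < 0 := by
      have : 1 ≤ i := Nat.one_le_iff_ne_zero.mpr hi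
      have : (1 : ℤ) ≤ (i : ℤ) := by exact_mod_cast this
      push_cast
      linarith
    rw [intChoose_of_neg this]
    ring
  · intro h
    exact absurd (Finset.mem_range.mpr (Nat.succ_pos t)) h

lemma aFun_t_zero (n k : ℕ) : aFun n k 0 = (n.choose k : ℤ) := by
  unfold aFun
  rw [Finset.sum_range_one]
  simp only [Nat.cast_zero, mul_zero, sub_zero, pow_zero]
  rw [intChoose_zero_right le_rfl, intChoose_natCast_s10]
  ring

lemma aFun_bounds : ∀ n k t : ℕ, 2 * t ≤ n →
    0 ≤ aFun n k t ∧ aFun n k t ≤ (n.choose k : ℤ) := by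
  intro n
  induction n using Nat.strong_induction_on with
  | _ n IH =>
    intro k t ht
    match k with
    | 0 =>
      rw [aFun_k_zero]
      simp
    | 1 =>
      rw [aFun_k_one, Nat.choose_one_right]
      exact ⟨by positivity, le_rfl⟩
    | k' + 2 =>
      match t with
      | 0 =>
        rw [aFun_t_zero]
        constructor
        · positivity
        · exact le_rfl
      | s + 1 =>
        rcases lt_or_eq_of_le ht with hlt | heq
        · -- n > 2(s+1): Pascal in n
          obtain ⟨m, rfl⟩ : ∃ m, n = m + 1 := ⟨n - 1, by omega⟩
          have hm : 2 * (s + 1) ≤ m := by omega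
          rw [aFun_pascal m (k' + 1) (s + 1) hm]
          obtain ⟨h1, h2⟩ := IH m (by omega) (k' + 2) (s + 1) hm
          obtain ⟨h3, h4⟩ := IH m (by omega) (k' + 1) (s + 1) hm
          constructor
          · linarith
          · rw [Nat.choose_succ_succ (m) (k' + 1)]
            push_cast
            linarith
        · -- n = 2(s+1)
          obtain ⟨m, rfl⟩ : ∃ m, n = m + 2 := ⟨n - 2, by omega⟩
          have hm : 2 * s ≤ m := by omega
          have e0 := aFun_pair m k' s
          have e1 := aFun_pascal (m + 1) (k' + 1) s (by omega)
          have e2 := aFun_pascal m (k' + 1) s hm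
          have e3 := aFun_pascal m k' s hm
          obtain ⟨h1, h2⟩ := IH m (by omega) (k' + 2) s hm
          obtain ⟨h3, h4⟩ := IH m (by omega) (k' + 1) s hm
          obtain ⟨h5, h6⟩ := IH m (by omega) k' s hm
          have key : aFun (m + 2) (k' + 2) (s + 1)
              = aFun m (k' + 2) s + 2 * aFun m (k' + 1) s := by
            rw [e0, e1, e2, e3]; ring
          rw [key]
          constructor
          · linarith
          · have c1 : (m + 2).choose (k' + 2) = (m + 1).choose (k' + 1) + (m + 1).choose (k' + 2) :=
              Nat.choose_succ_succ (m + 1) (k' + 1)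
            have c2 : (m + 1).choose (k' + 1) = m.choose k' + m.choose (k' + 1) :=
              Nat.choose_succ_succ m k'
            have c3 : (m + 1).choose (k' + 2) = m.choose (k' + 1) + m.choose (k' + 2) :=
              Nat.choose_succ_succ m (k' + 1)
            have hch : (0 : ℤ) ≤ (m.choose k' : ℤ) := by positivity
            rw [c1, c2, c3]
            push_cast
            linarith

theorem stmt_10 (n k t : ℕ) (h2t : 2 * t ≤ n) :
    (0 ≤ aFun n k t ∧ aFun n k t ≤ (n.choose k : ℤ)) ∧
      (2 * (t + 1) ≤ n → aFun n k (t + 1) ≤ aFun n k t) := by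
  refine ⟨aFun_bounds n k t h2t, fun h => ?_⟩
  match k with
  | 0 => rw [aFun_k_zero, aFun_k_zero]
  | 1 => rw [aFun_k_one, aFun_k_one]
  | k' + 2 =>
    obtain ⟨m, rfl⟩ : ∃ m, n = m + 2 := ⟨n - 2, by omega⟩
    rw [aFun_pair m k' t]
    have := (aFun_bounds m k' t (by omega)).1
    linarith
end

section
/- Define R(λ) = (2 − λ)·log(1 − λ/2) − (1 − λ)·log(1 − λ) for 0 < λ ≤ 1 (with the convention (1−λ)log(1−λ) = 0 at λ = 1). Then R(λ) < 0 for all λ with 0 < λ ≤ 1. -/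
/-! With `φ x = x * log x`, the claim reads `2 φ(1 - λ/2) < φ(1 - λ) + φ 1`, since `φ 1 = 0`.
As `1 - λ/2` is the midpoint of `1 - λ ≠ 1` and `1`, this is strict convexity of `φ` on `[0, ∞)`. -/

theorem stmt_14 (lam : ℝ) (h0 : 0 < lam) (h1 : lam ≤ 1) :
    (2 - lam) * Real.log (1 - lam / 2) - (1 - lam) * Real.log (1 - lam) < 0 := by
  have hjensen := Real.strictConvexOn_mul_log.2 (Set.mem_Ici.2 (by linarith : (0 : ℝ) ≤ 1 - lam))
    (Set.mem_Ici.2 zero_le_one) (by linarith : 1 - lam ≠ 1)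
    (by norm_num : (0 : ℝ) < 1 / 2) (by norm_num : (0 : ℝ) < 1 / 2) (by norm_num)
  have hmid : 1 / 2 * (1 - lam) + 1 / 2 * 1 = 1 - lam / 2 := by ring
  simp only [smul_eq_mul, hmid, Real.log_one, mul_zero, add_zero] at hjensen
  linarith
end

section
/- Fix a real constant c with 0 < c < 1/2. For d ≥ 1 let G = (ℤ/2ℤ)^d, n = 2^d, k = ⌊cn⌋, and let Pr_n(Diam > 2) be the probability, under the uniform distribution on k-element subsets S of G \ {1}, that some y ∈ G \ {1} satisfies y ∉ S and y ≠ s₁s₂ for all s₁, s₂ ∈ S. Then there exist constants β > 0 and N such that for all d with 2^d ≥ N one has Pr_n(Diam > 2) ≤ e^{−βn}; in particular, the diameter of a random Cayley digraph on an elementary abelian 2-group of order n and degree ⌊cn⌋ is asymptotically almost surely equal to two, with exponentially fast convergence. -/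
/-!
Union bound over `y`. Since every element of `G` squares to `1`, `s₁ * s₂ = y` means
`s₂ = s₁ * y`, so a set `S` with `y ∉ S` and `y ∉ S * S` contains at most one point of each of the
`m = n / 2 - 1` pairs `{x, x * y}` other than `{1, y}`; a coordinate hyperplane avoiding `y` picks one
point from every pair, and there are at most `C(m, k) 2 ^ k` such sets. Against the `C(2m + 1, k)`
sets in all, this saves `∏_{i < k} 2 (m - i) / (2m + 1 - i) ≤ exp (-k (k + 1) / (2 (n - 1)))`,
which is `exp (-Θ(c² n))` and beats the factor `n - 1` of the union bound.
-/

open Finset Function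

section Combinatorics

variable {α : Type*} [DecidableEq α]

/-- `S` is encoded by its image under `x ↦ if x ∈ R then x else σ x`, a `k`-subset of `R`,
together with the part of that image that lies in `S`. -/
theorem card_filter_powersetCard_forall_apply_notMem_le {σ : α → α} (hσ : Involutive σ)
    {R U : Finset α} (hR : ∀ x ∈ U, x ∉ R → σ x ∈ R) (k : ℕ)
    [DecidablePred fun S : Finset α => ∀ s ∈ S, σ s ∉ S] :
    #{S ∈ U.powersetCard k | ∀ s ∈ S, σ s ∉ S} ≤ (#R).choose k * 2 ^ k := by
  set r : α → α := fun x => if x ∈ R then x else σ x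
  have hrecover : ∀ S : Finset α, (∀ s ∈ S, σ s ∉ S) →
      S = (S.image r ∩ S) ∪ (S.image r \ (S.image r ∩ S)).image σ := by
    intro S hS
    ext x
    simp only [mem_union, mem_inter, mem_sdiff, mem_image, r]
    constructor
    · intro hx
      by_cases hxR : x ∈ R
      · exact Or.inl ⟨⟨x, hx, if_pos hxR⟩, hx⟩
      · exact Or.inr ⟨σ x, ⟨⟨x, hx, if_neg hxR⟩, fun h => hS x hx h.2⟩, hσ x⟩
    · rintro (⟨-, hx⟩ | ⟨-, ⟨⟨s, hs, rfl⟩, hsS⟩, rfl⟩)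
      · exact hx
      · by_cases hsR : s ∈ R
        · simp only [if_pos hsR] at hsS
          exact absurd ⟨⟨s, hs, if_pos hsR⟩, hs⟩ hsS
        · rwa [if_neg hsR, hσ s]
  have hcard : #((R.powersetCard k).sigma fun A => A.powerset) = (#R).choose k * 2 ^ k := by
    rw [card_sigma, sum_const_nat fun A hA => by rw [card_powerset, (mem_powersetCard.1 hA).2],
      card_powersetCard]
  rw [← hcard]
  refine card_le_card_of_injOn (fun S => ⟨S.image r, S.image r ∩ S⟩) ?_ ?_
  · intro S hS
    simp only [coe_filter, mem_powersetCard] at hS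
    obtain ⟨⟨hSU, rfl⟩, hS⟩ := hS
    have hinj : Set.InjOn r S := by
      intro s hs t ht hst
      by_cases hsR : s ∈ R <;> by_cases htR : t ∈ R <;>
        simp only [r, if_pos, if_neg, hsR, htR, not_false_eq_true] at hst
      · exact hst
      · exact absurd (by rw [hst, hσ t]; exact ht) (hS s hs)
      · exact absurd (by rw [← hst, hσ s]; exact hs) (hS t ht)
      · exact hσ.injective hst
    refine mem_sigma.2 ⟨mem_powersetCard.2 ⟨fun x hx => ?_, card_image_of_injOn hinj⟩,
      mem_powerset.2 inter_subset_left⟩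
    obtain ⟨s, hs, rfl⟩ := mem_image.1 hx
    by_cases hsR : s ∈ R
    · simp [r, hsR]
    · simpa [r, hsR] using hR s (hSU hs) hsR
  · intro S hS T hT hST
    simp only [coe_filter, mem_powersetCard] at hS hT
    simp only [Sigma.mk.injEq, heq_eq_eq] at hST
    rw [hrecover S hS.2, hrecover T hT.2, hST.2, hST.1]

theorem card_filter_exists_le_mul {ι : Type*} (s : Finset α) (t : Finset ι) (p : α → ι → Prop)
    [∀ i, DecidablePred (p · i)] [DecidablePred fun a => ∃ i ∈ t, p a i] {b : ℕ}
    (h : ∀ i ∈ t, #{a ∈ s | p a i} ≤ b) :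
    #{a ∈ s | ∃ i ∈ t, p a i} ≤ #t * b := by
  calc #{a ∈ s | ∃ i ∈ t, p a i} ≤ #(t.biUnion fun i => {a ∈ s | p a i}) := by
        refine card_le_card fun a ha => ?_
        obtain ⟨has, i, hi, hpi⟩ := mem_filter.1 ha
        exact mem_biUnion.2 ⟨i, hi, mem_filter.2 ⟨has, hpi⟩⟩
    _ ≤ #t * b := card_biUnion_le_card_mul _ _ _ h

end Combinatorics

section ExponentTwo

variable {G : Type*} [Group G] [Fintype G] [DecidableEq G]

theorem two_mul_card_eq_card_of_mem_iff_mul_notMem {H : Finset G} {y : G}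
    (hH : ∀ x, x ∈ H ↔ x * y ∉ H) : 2 * #H = Fintype.card G := by
  have hcompl : #Hᶜ = #H := by
    refine card_nbij' (· * y⁻¹) (· * y) (fun x hx => ?_) (fun x hx => ?_) (fun x _ => ?_)
      (fun x _ => ?_)
    · simpa [hH (x * y⁻¹)] using hx
    · simpa [← hH x] using hx
    · simp
    · simp
  have := card_le_univ H
  rw [card_compl] at hcompl
  omega

theorem card_filter_unreached_le (hG : ∀ g : G, g * g = 1) {H : Finset G} {y : G}
    (hH : ∀ x, x ∈ H ↔ x * y ∉ H) (h1 : (1 : G) ∈ H) (k : ℕ)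
    [DecidablePred fun S : Finset G => y ∉ S ∧ ∀ s₁ ∈ S, ∀ s₂ ∈ S, y ≠ s₁ * s₂] :
    #{S ∈ (univ.erase 1).powersetCard k | y ∉ S ∧ ∀ s₁ ∈ S, ∀ s₂ ∈ S, y ≠ s₁ * s₂}
      ≤ (#H - 1).choose k * 2 ^ k := by
  have hσ : Involutive (· * y) := fun x => by simp [mul_assoc, hG]
  have hR : ∀ x ∈ (univ.erase 1).erase y, x ∉ H.erase 1 → x * y ∈ H.erase 1 := by
    intro x hx hxH
    obtain ⟨hxy, hx1⟩ : x ≠ y ∧ x ≠ 1 := by simpa using hx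
    have hxH' : x ∉ H := fun h => hxH (mem_erase.2 ⟨hx1, h⟩)
    refine mem_erase.2 ⟨fun h => hxy ?_, (hH (x * y)).2 ?_⟩
    · calc x = x * y * y := by rw [mul_assoc, hG, mul_one]
        _ = y := by rw [h, one_mul]
    · rwa [mul_assoc, hG, mul_one]
  calc _ ≤ #{S ∈ ((univ.erase 1).erase y).powersetCard k | ∀ s ∈ S, s * y ∉ S} := by
        refine card_le_card fun S hS => ?_
        simp only [mem_filter, mem_powersetCard] at hS ⊢
        obtain ⟨⟨hS1, rfl⟩, hyS, hprod⟩ := hS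
        refine ⟨⟨fun s hs => mem_erase.2 ⟨fun h => hyS (h ▸ hs), hS1 hs⟩, rfl⟩, fun s hs hsy => ?_⟩
        exact hprod s hs _ hsy (by rw [← mul_assoc, hG, one_mul])
    _ ≤ (#(H.erase 1)).choose k * 2 ^ k :=
        card_filter_powersetCard_forall_apply_notMem_le hσ hR k
    _ = (#H - 1).choose k * 2 ^ k := by rw [card_erase_of_mem h1]

end ExponentTwo

section ElementaryAbelian

variable {d : ℕ}

theorem mul_self_eq_one_of_zmod_two (g : Multiplicative (Fin d → ZMod 2)) : g * g = 1 := by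
  funext i
  exact CharTwo.add_self_eq_zero (g.toAdd i)

theorem exists_mem_iff_mul_notMem {y : Multiplicative (Fin d → ZMod 2)} (hy : y ≠ 1) :
    ∃ H : Finset (Multiplicative (Fin d → ZMod 2)), 1 ∈ H ∧ ∀ x, x ∈ H ↔ x * y ∉ H := by
  obtain ⟨i, hi⟩ := Function.ne_iff.1 hy
  refine ⟨univ.filter fun x => x.toAdd i = 0, by simp, fun x => ?_⟩
  have hyi : y.toAdd i = 1 := (by decide : ∀ a : ZMod 2, a ≠ 0 → a = 1) _ hi
  simp only [mem_filter, mem_univ, true_and, toAdd_mul, Pi.add_apply, hyi]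
  generalize x.toAdd i = a
  revert a; decide

theorem card_filter_exists_unreached_le (k : ℕ)
    [DecidablePred fun S : Finset (Multiplicative (Fin d → ZMod 2)) =>
      ∃ y ∈ univ.erase 1, y ∉ S ∧ ∀ s₁ ∈ S, ∀ s₂ ∈ S, y ≠ s₁ * s₂] :
    #{S ∈ (univ.erase (1 : Multiplicative (Fin d → ZMod 2))).powersetCard k |
        ∃ y ∈ univ.erase 1, y ∉ S ∧ ∀ s₁ ∈ S, ∀ s₂ ∈ S, y ≠ s₁ * s₂}
      ≤ (2 ^ d - 1) * ((2 ^ d / 2 - 1).choose k * 2 ^ k) := by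
  have hcard : Fintype.card (Multiplicative (Fin d → ZMod 2)) = 2 ^ d := by simp
  have hcard_erase : #(univ.erase (1 : Multiplicative (Fin d → ZMod 2))) = 2 ^ d - 1 := by
    rw [card_erase_of_mem (mem_univ _), card_univ, hcard]
  rw [← hcard_erase]
  classical
  refine card_filter_exists_le_mul _ _ _ fun y hy => ?_
  obtain ⟨H, h1, hH⟩ := exists_mem_iff_mul_notMem (mem_erase.1 hy).1
  have hHcard : #H = 2 ^ d / 2 := by
    have := two_mul_card_eq_card_of_mem_iff_mul_notMem hH
    omega
  rw [← hHcard]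
  exact card_filter_unreached_le mul_self_eq_one_of_zmod_two hH h1 k

end ElementaryAbelian

open Real Filter

section Estimates

theorem two_mul_sub_le_mul_exp {m i : ℝ} (hi : 0 ≤ i) (him : i ≤ m) :
    2 * (m - i) ≤ (2 * m + 1 - i) * exp (-((i + 1) / (2 * m + 1))) := by
  have hM : 0 < 2 * m + 1 := by linarith
  calc 2 * (m - i) ≤ (2 * m + 1 - i) * (1 - (i + 1) / (2 * m + 1)) := by
        rw [one_sub_div hM.ne', mul_div_assoc', le_div_iff₀ hM]
        nlinarith
    _ ≤ (2 * m + 1 - i) * exp (-((i + 1) / (2 * m + 1))) := by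
        gcongr
        · linarith
        · linarith [add_one_le_exp (-((i + 1) / (2 * m + 1)))]

theorem two_pow_mul_choose_le_choose_mul_exp (m k : ℕ) :
    (2 : ℝ) ^ k * m.choose k ≤ (2 * m + 1).choose k * exp (-(k * (k + 1) / (2 * (2 * m + 1)))) := by
  induction k with
  | zero => simp
  | succ k ih =>
    rcases le_or_gt m k with hmk | hkm
    · rw [Nat.choose_eq_zero_of_lt (Nat.lt_succ_of_le hmk)]
      simp only [Nat.cast_zero, mul_zero]
      positivity
    have hm := congrArg (Nat.cast (R := ℝ)) (Nat.choose_succ_right_eq m k)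
    have hM := congrArg (Nat.cast (R := ℝ)) (Nat.choose_succ_right_eq (2 * m + 1) k)
    push_cast [Nat.cast_sub hkm.le, Nat.cast_sub (by omega : k ≤ 2 * m + 1)] at hm hM
    have hfactor := two_mul_sub_le_mul_exp (Nat.cast_nonneg k) (Nat.cast_le.2 hkm.le)
    refine le_of_mul_le_mul_right ?_ (by positivity : (0 : ℝ) < k + 1)
    calc (2 : ℝ) ^ (k + 1) * m.choose (k + 1) * (k + 1) = 2 ^ k * m.choose k * (2 * (m - k)) := by
          rw [mul_assoc, hm]; ring
      _ ≤ (2 * m + 1).choose k * exp (-(k * (k + 1) / (2 * (2 * m + 1)))) *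
            ((2 * m + 1 - k) * exp (-((k + 1) / (2 * m + 1)))) := by
          gcongr
          linarith [(Nat.cast_le (α := ℝ)).2 hkm.le]
      _ = (2 * m + 1).choose (k + 1) *
            exp (-((k + 1 : ℕ) * ((k + 1 : ℕ) + 1) / (2 * (2 * m + 1)))) * (k + 1) := by
          rw [mul_right_comm _ _ (k + 1 : ℝ), hM, mul_mul_mul_comm, ← exp_add]
          push_cast
          congr 2
          field_simp
          ring

theorem sub_one_mul_exp_le {c x : ℝ} (hc : 0 < c) (hx : 1 < x) :
    (x - 1) * exp (-(⌊c * x⌋₊ * (⌊c * x⌋₊ + 1) / (2 * (x - 1)))) ≤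
      exp (log x + c / 2 - c ^ 2 * x / 2) := by
  set K : ℝ := (⌊c * x⌋₊ : ℝ)
  have hK : c * x ≤ K + 1 := (Nat.lt_floor_add_one _).le
  have hexponent : c * (c * x - 1) / 2 ≤ K * (K + 1) / (2 * (x - 1)) :=
    calc c * (c * x - 1) / 2 = (c * x - 1) * (c * x) / (2 * x) := by field_simp
      _ ≤ K * (K + 1) / (2 * x) := by gcongr; linarith
      _ ≤ K * (K + 1) / (2 * (x - 1)) := by gcongr; linarith
  calc (x - 1) * exp (-(K * (K + 1) / (2 * (x - 1)))) ≤ x * exp (-(c * (c * x - 1) / 2)) := by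
        gcongr; linarith
    _ = exp (log x + c / 2 - c ^ 2 * x / 2) := by
        rw [show log x + c / 2 - c ^ 2 * x / 2 = log x + -(c * (c * x - 1) / 2) by ring, exp_add,
          exp_log (by linarith)]

theorem eventually_sub_one_mul_exp_le {c : ℝ} (hc : 0 < c) :
    ∀ᶠ x : ℝ in atTop,
      (x - 1) * exp (-(⌊c * x⌋₊ * (⌊c * x⌋₊ + 1) / (2 * (x - 1)))) ≤ exp (-(c ^ 2 / 4) * x) := by
  filter_upwards [isLittleO_log_id_atTop.bound (by positivity : 0 < c ^ 2 / 8),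
    eventually_gt_atTop 1, eventually_ge_atTop (4 / c)] with x hlog hx1 hx
  rw [div_le_iff₀ hc] at hx
  rw [norm_of_nonneg (log_nonneg hx1.le), id, norm_of_nonneg (by linarith)] at hlog
  refine (sub_one_mul_exp_le hc hx1).trans (exp_le_exp.2 ?_)
  nlinarith

end Estimates

theorem stmt_15_general (c : ℝ) (hc0 : 0 < c) :
    ∃ β : ℝ, 0 < β ∧ ∃ N : ℕ, ∀ d : ℕ, 1 ≤ d → N ≤ 2 ^ d →
      (let G := Multiplicative (Fin d → ZMod 2)
       let n : ℕ := 2 ^ d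
       let k : ℕ := ⌊c * n⌋₊
       ((((Finset.univ.erase (1 : G)).powersetCard k).filter
           (fun S => ∃ y ∈ Finset.univ.erase (1 : G),
             y ∉ S ∧ ∀ s₁ ∈ S, ∀ s₂ ∈ S, y ≠ s₁ * s₂)).card : ℝ)
         / (((Finset.univ.erase (1 : G)).powersetCard k).card : ℝ)
         ≤ Real.exp (-β * n)) := by
  obtain ⟨N, hN⟩ := eventually_atTop.1 <|
    tendsto_natCast_atTop_atTop.eventually (eventually_sub_one_mul_exp_le hc0)
  refine ⟨c ^ 2 / 4, by positivity, N, fun d hd hNd => ?_⟩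
  dsimp only
  set k := ⌊c * ((2 ^ d : ℕ) : ℝ)⌋₊
  set m := 2 ^ d / 2 - 1
  have hm : 2 ^ d - 1 = 2 * m + 1 := by
    have : 2 ^ d = 2 * 2 ^ (d - 1) := by rw [← pow_succ']; congr; omega
    have := Nat.one_le_two_pow (n := d - 1)
    omega
  have hn : ((2 ^ d : ℕ) : ℝ) - 1 = 2 * m + 1 := by
    rw [show 2 ^ d = 2 * m + 1 + 1 by omega]; push_cast; ring
  have hden : #((univ.erase (1 : Multiplicative (Fin d → ZMod 2))).powersetCard k) =
      (2 * m + 1).choose k := by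
    rw [card_powersetCard, card_erase_of_mem (mem_univ _), card_univ]; simp [hm]
  refine div_le_of_le_mul₀ (by positivity) (by positivity) ?_
  calc _ ≤ (2 * m + 1 : ℝ) * (2 ^ k * m.choose k) := by
        rw [mul_comm ((2 : ℝ) ^ k)]
        exact_mod_cast hm ▸ card_filter_exists_unreached_le k
    _ ≤ (2 * m + 1) * ((2 * m + 1).choose k * exp (-(k * (k + 1) / (2 * (2 * m + 1))))) :=
        mul_le_mul_of_nonneg_left (two_pow_mul_choose_le_choose_mul_exp m k) (by positivity)
    _ = (((2 ^ d : ℕ) : ℝ) - 1) * exp (-(k * (k + 1) / (2 * (((2 ^ d : ℕ) : ℝ) - 1)))) *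
          (2 * m + 1).choose k := by rw [hn]; ring
    _ ≤ exp (-(c ^ 2 / 4) * (2 ^ d : ℕ)) * _ := by gcongr; exact hN _ hNd
    _ = _ := by rw [hden]

theorem stmt_15 (c : ℝ) (hc0 : 0 < c) (hc1 : c < 1 / 2) :
    ∃ β : ℝ, 0 < β ∧ ∃ N : ℕ, ∀ d : ℕ, 1 ≤ d → N ≤ 2 ^ d →
      (let G := Multiplicative (Fin d → ZMod 2)
       let n : ℕ := 2 ^ d
       let k : ℕ := ⌊c * n⌋₊
       ((((Finset.univ.erase (1 : G)).powersetCard k).filter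
           (fun S => ∃ y ∈ Finset.univ.erase (1 : G),
             y ∉ S ∧ ∀ s₁ ∈ S, ∀ s₂ ∈ S, y ≠ s₁ * s₂)).card : ℝ)
         / (((Finset.univ.erase (1 : G)).powersetCard k).card : ℝ)
         ≤ Real.exp (-β * n)) :=
  stmt_15_general c hc0
end

section
/- Fix a real constant α with 1/2 < α < 1. For d ≥ 1 let G = (ℤ/2ℤ)^d, n = 2^d, k = ⌊n^α⌋, and let Pr_n(Diam > 2) be the probability, under the uniform distribution on k-element subsets S of G \ {1}, that some y ∈ G \ {1} satisfies y ∉ S and y ≠ s₁s₂ for all s₁, s₂ ∈ S. Then Pr_n(Diam > 2) → 0 as d → ∞; i.e., the diameter of a random Cayley digraph on an elementary abelian 2-group of order n and degree ⌊n^α⌋ is asymptotically almost surely equal to two. -/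
/-!
Union bound over `y`. In a group of exponent two, `G \ {1, y}` splits into the `m = n/2 - 1`
pairs `{s, s y}`, and `s (s y) = y`; so a `k`-set `S` from which `y` is not reached in two steps
takes at most one element from each pair, and there are at most `C(m, k) 2^k` of them. Comparing
with `C(n - 1, k)` factor by factor gives the bound `(n - 1) exp (-k (k + 1) / (2 (n - 1)))` for
the probability, which is at most `n exp (-n^(2α - 1) / 4)` once `k ≈ n^α`.
-/

open Finset Filter Real

namespace Finset

variable {α : Type*} {σ : α → α} {A R : Finset α}

theorem exists_transversal_of_involutive (hσ : Function.Involutive σ) (hA : ∀ s ∈ A, σ s ∈ A)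
    (hfix : ∀ s ∈ A, σ s ≠ s) : ∃ R ⊆ A, ∀ s ∈ A, s ∈ R ↔ σ s ∉ R := by
  classical
  let _ : LinearOrder α := linearOrderOfSTO WellOrderingRel
  refine ⟨A.filter (fun s => s < σ s), filter_subset _ _, fun s hs => ?_⟩
  simp only [mem_filter, hA s hs, hs, hσ s, true_and, not_lt]
  exact ⟨le_of_lt, fun h => lt_of_le_of_ne h (hfix s hs).symm⟩

variable [DecidableEq α]

theorem card_eq_two_mul_card_of_transversal (hσ : Function.Involutive σ)
    (hA : ∀ s ∈ A, σ s ∈ A) (hRA : R ⊆ A) (hR : ∀ s ∈ A, s ∈ R ↔ σ s ∉ R) :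
    #A = 2 * #R := by
  have hcompl : #(A \ R) = #R := by
    refine card_nbij' σ σ (fun s hs => ?_) (fun s hs => ?_) (fun s _ => hσ s) (fun s _ => hσ s)
    · simp only [coe_sdiff, Set.mem_sdiff, mem_coe] at hs ⊢
      exact not_not.mp ((hR s hs.1).not.mp hs.2)
    · have hsA := hRA hs
      simp only [coe_sdiff, Set.mem_sdiff, mem_coe] at hs ⊢
      exact ⟨hA s hsA, (hR s hsA).mp hs⟩
  rw [← card_sdiff_add_card_eq_card hRA, hcompl, two_mul]

/-- A set `S` containing no pair `{s, σ s}` is encoded by `U = S ∩ R` together with the set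
`T ⊇ U` of representatives in `R` of the pairs it meets, and decoded as `U ∪ σ '' (T \ U)`. -/
theorem card_powersetCard_filter_pairFree_le (hσ : Function.Involutive σ)
    (hR : ∀ s ∈ A, s ∈ R ↔ σ s ∉ R) (k : ℕ) :
    #((A.powersetCard k).filter (fun S => ∀ s ∈ S, σ s ∉ S)) ≤ (#R).choose k * 2 ^ k := by
  have hdisj : ∀ S : Finset α, (∀ s ∈ S, σ s ∉ S) → Disjoint (S ∩ R) ((S \ R).image σ) := by
    intro S hS
    simp only [disjoint_left, mem_inter, mem_image, mem_sdiff, not_exists, not_and]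
    intro x hx t ht htx
    exact hS t ht.1 (htx ▸ hx.1)
  have htarget : #((R.powersetCard k).sigma fun T => T.powerset) = (#R).choose k * 2 ^ k := by
    rw [card_sigma, sum_congr rfl fun T hT => by rw [card_powerset, (mem_powersetCard.mp hT).2],
      sum_const, card_powersetCard, smul_eq_mul]
  rw [← htarget]
  refine card_le_card_of_injOn (fun S => ⟨S ∩ R ∪ (S \ R).image σ, S ∩ R⟩) (fun S hS => ?_)
    (fun S hS S' hS' h => ?_)
  · simp only [coe_filter, mem_powersetCard, Set.mem_ofPred_eq] at hS
    obtain ⟨⟨hSA, hSk⟩, hSσ⟩ := hS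
    simp only [coe_sigma, Set.mem_sigma_iff, mem_coe, mem_powersetCard, mem_powerset]
    refine ⟨⟨union_subset inter_subset_right fun x hx => ?_, ?_⟩, subset_union_left⟩
    · obtain ⟨s, hs, rfl⟩ := mem_image.mp hx
      rw [mem_sdiff] at hs
      exact not_not.mp ((hR s (hSA hs.1)).not.mp hs.2)
    · rw [card_union_of_disjoint (hdisj S hSσ), card_image_of_injective _ hσ.injective,
        card_inter_add_card_sdiff, hSk]
  · have decode : ∀ S ∈ (A.powersetCard k).filter (fun S => ∀ s ∈ S, σ s ∉ S),
        S = S ∩ R ∪ ((S ∩ R ∪ (S \ R).image σ) \ (S ∩ R)).image σ := by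
      intro S hS
      rw [union_sdiff_cancel_left (hdisj S (mem_filter.mp hS).2), image_image,
        hσ.comp_self, image_id, union_comm, sdiff_union_inter]
    simp only [Sigma.mk.injEq, heq_eq_eq] at h
    rw [decode S hS, decode S' hS', h.1, h.2]

end Finset

theorem sum_range_natCast_add_one (k : ℕ) : ∑ i ∈ range k, ((i : ℝ) + 1) = k * (k + 1) / 2 := by
  induction k with
  | zero => simp
  | succ n ih => rw [sum_range_succ, ih]; push_cast; ring

/-- Compare the descending factorials factor by factor: with `N = 2m + 1`,
`2 (m - i) = (N - i) - (i + 1) ≤ (N - i) (1 - (i + 1) / N) ≤ (N - i) e^{-(i + 1) / N}`. -/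
theorem two_pow_mul_choose_le (m k : ℕ) :
    (2 : ℝ) ^ k * m.choose k
      ≤ (2 * m + 1).choose k * exp (-(k * (k + 1) / 2) / (2 * m + 1)) := by
  set N : ℝ := 2 * m + 1 with hN
  have hNpos : 0 < N := by positivity
  have hfactor (i : ℕ) :
      2 * ((m - i : ℕ) : ℝ) ≤ ((2 * m + 1 - i : ℕ) : ℝ) * exp (-((i + 1) / N)) := by
    rcases le_or_gt m i with him | him
    · rw [Nat.sub_eq_zero_of_le him, Nat.cast_zero, mul_zero]
      positivity
    have hcast : ((2 * m + 1 - i : ℕ) : ℝ) = N - i := by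
      rw [Nat.cast_sub (by omega), hN]; push_cast; ring
    have hiN : (i : ℝ) < N := by rw [hN]; exact_mod_cast (by omega : i < 2 * m + 1)
    rw [hcast, Nat.cast_sub him.le]
    calc 2 * ((m : ℝ) - i) ≤ (N - i) - (i + 1) + (i + 1) * i / N := by
          rw [hN]; have : 0 ≤ (i + 1) * (i : ℝ) / N := by positivity
          linarith
      _ = (N - i) * (1 - (i + 1) / N) := by field_simp; ring
      _ ≤ (N - i) * exp (-((i + 1) / N)) := by
          gcongr
          linarith [add_one_le_exp (-(((i : ℝ) + 1) / N))]
  have hdesc : (2 : ℝ) ^ k * m.descFactorial k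
      ≤ (2 * m + 1).descFactorial k * exp (-(k * (k + 1) / 2) / N) := by
    rw [Nat.descFactorial_eq_prod_range, Nat.descFactorial_eq_prod_range,
      ← sum_range_natCast_add_one, neg_div, sum_div, ← sum_neg_distrib, exp_sum, Nat.cast_prod,
      Nat.cast_prod, ← prod_mul_distrib, ← card_range k, ← prod_const, card_range, ← prod_mul_distrib]
    exact prod_le_prod (fun i _ => by positivity) (fun i _ => hfactor i)
  refine le_of_mul_le_mul_left ?_ (by positivity : (0 : ℝ) < k.factorial)
  calc (k.factorial : ℝ) * (2 ^ k * m.choose k) = 2 ^ k * m.descFactorial k := by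
        rw [Nat.descFactorial_eq_factorial_mul_choose]; push_cast; ring
    _ ≤ (2 * m + 1).descFactorial k * exp (-(k * (k + 1) / 2) / N) := hdesc
    _ = k.factorial * ((2 * m + 1).choose k * exp (-(k * (k + 1) / 2) / N)) := by
        rw [Nat.descFactorial_eq_factorial_mul_choose]; push_cast; ring

section ExponentTwo

variable {G : Type*} [Group G] [Fintype G] [DecidableEq G]

theorem card_powersetCard_filter_avoids_le (hG : ∀ g : G, g * g = 1) {y : G} (hy : y ≠ 1)
    (k : ℕ) :
    (#(((univ.erase (1 : G)).powersetCard k).filter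
        (fun S => y ∉ S ∧ ∀ s₁ ∈ S, ∀ s₂ ∈ S, y ≠ s₁ * s₂)) : ℝ)
      ≤ (Fintype.card G - 1).choose k
        * exp (-(k * (k + 1) / 2) / ((Fintype.card G - 1 : ℕ) : ℝ)) := by
  set A := (univ.erase (1 : G)).erase y
  have hmemA (s : G) : s ∈ A ↔ s ≠ y ∧ s ≠ 1 := by simp [A]
  have hσ : Function.Involutive (· * y) := fun s => by simp [mul_assoc, hG]
  have hA : ∀ s ∈ A, s * y ∈ A := by
    intro s hs
    rw [hmemA] at hs ⊢
    exact ⟨fun h => hs.2 (by simpa using h),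
      fun h => hs.1 ((eq_inv_of_mul_eq_one_left h).trans (inv_eq_of_mul_eq_one_left (hG y)))⟩
  obtain ⟨R, hRA, hR⟩ :=
    exists_transversal_of_involutive hσ hA fun s _ h => hy (by simpa using h)
  have hcard : Fintype.card G - 1 = 2 * #R + 1 := by
    have hA2 : #A + 2 = Fintype.card G := by
      rw [card_erase_of_mem (by simpa using hy), card_erase_of_mem (mem_univ 1), card_univ]
      have : 1 < Fintype.card G := Fintype.one_lt_card_iff.mpr ⟨y, 1, hy⟩
      omega
    rw [← hA2, card_eq_two_mul_card_of_transversal hσ hA hRA hR]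
    rfl
  have hbad : #(((univ.erase (1 : G)).powersetCard k).filter
        (fun S => y ∉ S ∧ ∀ s₁ ∈ S, ∀ s₂ ∈ S, y ≠ s₁ * s₂)) ≤ (#R).choose k * 2 ^ k := by
    refine le_trans (card_le_card fun S => ?_) (card_powersetCard_filter_pairFree_le hσ hR k)
    simp only [mem_filter, mem_powersetCard, and_imp]
    intro hS1 hSk hyS hprod
    refine ⟨⟨fun s hs => (hmemA s).mpr ⟨fun h => hyS (h ▸ hs), by simpa using hS1 hs⟩, hSk⟩,
      fun s hs hsy => hprod s hs _ hsy ?_⟩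
    rw [← mul_assoc, hG, one_mul]
  calc _ ≤ ((#R).choose k * 2 ^ k : ℝ) := by exact_mod_cast hbad
    _ ≤ _ := by
        rw [hcard, mul_comm]
        push_cast
        exact two_pow_mul_choose_le _ _

theorem card_powersetCard_filter_exists_avoids_div_le (hG : ∀ g : G, g * g = 1) (k : ℕ) :
    (#(((univ.erase (1 : G)).powersetCard k).filter
        (fun S => ∃ y ∈ univ.erase (1 : G), y ∉ S ∧ ∀ s₁ ∈ S, ∀ s₂ ∈ S, y ≠ s₁ * s₂)) : ℝ)
      / #((univ.erase (1 : G)).powersetCard k)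
      ≤ ((Fintype.card G - 1 : ℕ) : ℝ)
        * exp (-(k * (k + 1) / 2) / ((Fintype.card G - 1 : ℕ) : ℝ)) := by
  have hcard : #(univ.erase (1 : G)) = Fintype.card G - 1 := by
    rw [card_erase_of_mem (mem_univ 1), card_univ]
  refine div_le_of_le_mul₀ (Nat.cast_nonneg _) (by positivity) ?_
  rw [card_powersetCard, hcard]
  calc _ ≤ ∑ y ∈ univ.erase (1 : G), (#(((univ.erase (1 : G)).powersetCard k).filter
            (fun S => y ∉ S ∧ ∀ s₁ ∈ S, ∀ s₂ ∈ S, y ≠ s₁ * s₂)) : ℝ) := by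
        push_cast [← Nat.cast_sum]
        refine Nat.cast_le.mpr (le_trans (card_le_card fun S hS => ?_) card_biUnion_le)
        simp only [mem_filter] at hS
        obtain ⟨hS, y, hy, hyS⟩ := hS
        exact mem_biUnion.mpr ⟨y, hy, mem_filter.mpr ⟨hS, hyS⟩⟩
    _ ≤ ∑ _y ∈ univ.erase (1 : G), ((Fintype.card G - 1).choose k
          * exp (-(k * (k + 1) / 2) / ((Fintype.card G - 1 : ℕ) : ℝ)) : ℝ) :=
        sum_le_sum fun y hy => card_powersetCard_filter_avoids_le hG (ne_of_mem_erase hy) k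
    _ = _ := by rw [sum_const, hcard, nsmul_eq_mul]; ring

end ExponentTwo

theorem tendsto_mul_exp_neg_mul_rpow_atTop_nhds_zero {ε b : ℝ} (hε : 0 < ε) (hb : 0 < b) :
    Tendsto (fun x : ℝ => x * exp (-b * x ^ ε)) atTop (nhds 0) := by
  refine ((tendsto_rpow_mul_exp_neg_mul_atTop_nhds_zero ε⁻¹ b hb).comp
    (tendsto_rpow_atTop hε)).congr' ?_
  filter_upwards [eventually_ge_atTop 0] with x hx
  simp only [Function.comp_apply, rpow_rpow_inv hx hε.ne']

theorem tendsto_pred_mul_exp_neg_floor_rpow_nhds_zero {α : ℝ} (hα : 1 / 2 < α) :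
    Tendsto (fun n : ℕ => ((n - 1 : ℕ) : ℝ)
      * exp (-(⌊(n : ℝ) ^ α⌋₊ * (⌊(n : ℝ) ^ α⌋₊ + 1) / 2) / ((n - 1 : ℕ) : ℝ))) atTop (nhds 0) := by
  have hε : 0 < 2 * α - 1 := by linarith
  refine squeeze_zero' (Eventually.of_forall fun n => by positivity) ?_
    ((tendsto_mul_exp_neg_mul_rpow_atTop_nhds_zero hε (by norm_num : (0 : ℝ) < 1 / 4)).comp
      tendsto_natCast_atTop_atTop)
  have hlarge : ∀ᶠ n : ℕ in atTop, 2 ≤ (n : ℝ) ^ α :=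
    ((tendsto_rpow_atTop (by linarith)).comp tendsto_natCast_atTop_atTop).eventually_ge_atTop 2
  filter_upwards [hlarge, eventually_ge_atTop 2] with n hx hn
  set x := (n : ℝ) ^ α
  set k := ⌊x⌋₊
  have hN : ((n - 1 : ℕ) : ℝ) = n - 1 := by rw [Nat.cast_sub (by omega), Nat.cast_one]
  have hn2 : (2 : ℝ) ≤ n := by exact_mod_cast hn
  have hk : x - 1 < k := Nat.sub_one_lt_floor x
  have hx2 : x ^ 2 = n * (n : ℝ) ^ (2 * α - 1) := by
    rw [← rpow_natCast, ← rpow_mul (by positivity), ← rpow_one_add' (by positivity) (by linarith)]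
    ring_nf
  have hkk : x ^ 2 / 2 ≤ k * (k + 1) := by nlinarith
  have hexp : -(k * (k + 1) / 2) / ((n - 1 : ℕ) : ℝ) ≤ -(1 / 4) * (n : ℝ) ^ (2 * α - 1) := by
    rw [hN, div_le_iff₀ (by linarith)]
    nlinarith [rpow_nonneg (Nat.cast_nonneg n) (2 * α - 1)]
  simp only [Function.comp_apply]
  rw [hN] at hexp ⊢
  gcongr
  linarith

theorem stmt_16_general (α : ℝ) (hα1 : 1 / 2 < α) :
    Filter.Tendsto
      (fun d : ℕ =>
        let G := Multiplicative (Fin d → ZMod 2)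
        let n : ℕ := 2 ^ d
        let k : ℕ := ⌊(n : ℝ) ^ α⌋₊
        ((((Finset.univ.erase (1 : G)).powersetCard k).filter
            (fun S => ∃ y ∈ Finset.univ.erase (1 : G),
              y ∉ S ∧ ∀ s₁ ∈ S, ∀ s₂ ∈ S, y ≠ s₁ * s₂)).card : ℝ)
          / (((Finset.univ.erase (1 : G)).powersetCard k).card : ℝ))
      Filter.atTop (nhds 0) := by
  refine squeeze_zero (fun d => by positivity) (fun d => ?_)
    ((tendsto_pred_mul_exp_neg_floor_rpow_nhds_zero hα1).comp
      (tendsto_pow_atTop_atTop_of_one_lt one_lt_two))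
  have hG (g : Multiplicative (Fin d → ZMod 2)) : g * g = 1 :=
    funext fun i => CharTwo.add_self_eq_zero (g.toAdd i)
  have hcard : Fintype.card (Multiplicative (Fin d → ZMod 2)) = 2 ^ d := by simp
  have hbound := card_powersetCard_filter_exists_avoids_div_le hG ⌊((2 ^ d : ℕ) : ℝ) ^ α⌋₊
  rw [hcard] at hbound
  exact hbound

theorem stmt_16 (α : ℝ) (hα1 : 1 / 2 < α) (hα2 : α < 1) :
    Filter.Tendsto
      (fun d : ℕ =>
        let G := Multiplicative (Fin d → ZMod 2)
        let n : ℕ := 2 ^ d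
        let k : ℕ := ⌊(n : ℝ) ^ α⌋₊
        ((((Finset.univ.erase (1 : G)).powersetCard k).filter
            (fun S => ∃ y ∈ Finset.univ.erase (1 : G),
              y ∉ S ∧ ∀ s₁ ∈ S, ∀ s₂ ∈ S, y ≠ s₁ * s₂)).card : ℝ)
          / (((Finset.univ.erase (1 : G)).powersetCard k).card : ℝ))
      Filter.atTop (nhds 0) :=
  stmt_16_general α hα1
end
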